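/- Let s₁ > 0 and s < s₁ − 1/2 be real numbers. Then there exists a constant C > 0 such that for every function a : ℤ³ → [0, ∞): ∑_{n ∈ ℤ³} ⟨n⟩^{2s} ∑_{n₁ ∈ ℤ³ : (1/2)|n − n₁| ≤ |n₁| ≤ 2|n − n₁|} a(n₁) ⟨n − n₁⟩^{−2} ≤ C ∑_{m ∈ ℤ³} ⟨m⟩^{2s₁} a(m), where both sides may be infinite. -/

import Mathlib

/-- Japanese bracket of a lattice point `n ∈ ℤ³`: `⟨n⟩ = (1 + |n|²)^{1/2}`. -/
noncomputable def jb (n : Fin 3 → ℤ) : ℝ :=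
  Real.sqrt (1 + ∑ i, ((n i : ℝ)) ^ 2)

/-- Euclidean norm of a lattice point `n ∈ ℤ³`. -/
noncomputable def enorm' (n : Fin 3 → ℤ) : ℝ :=
  Real.sqrt (∑ i, ((n i : ℝ)) ^ 2)

/-!
On the resonant set `⟨n⟩ ≤ 3⟨n₁⟩` and `⟨n₁⟩ ≤ 2⟨n - n₁⟩`, so for `2 s₁ + 2 ≥ 0`
`⟨n⟩^{2s₁+2} ⟨n - n₁⟩^{-2} ≲ ⟨n₁⟩^{2s₁}`. Each term is therefore at most a constant times
`⟨n⟩^{-p} ⟨n₁⟩^{2s₁} a(n₁)` with `p = 2 s₁ + 2 - 2 s > 3`: the double sum factorises, and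
`∑ ⟨n⟩^{-p}` converges by comparison with the `p`-series of the lattice `ℤ³`.
-/

open scoped ENNReal

theorem summable_norm_rpow_neg_of_card_lt {ι : Type*} [Fintype ι] {p : ℝ}
    (hp : Fintype.card ι < p) : Summable fun n : ι → ℤ => ‖n‖ ^ (-p) := by
  let L := Submodule.span ℤ (Set.range (Pi.basisFun ℝ ι))
  have : DiscreteTopology L := ZSpan.discreteTopology_pi_basisFun
  have hrank : Module.finrank ℤ L = Fintype.card ι := by
    rw [ZLattice.rank ℝ L, Module.finrank_fintype_fun_eq_card]
  let embed : (ι → ℤ) → L := fun n =>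
    ⟨fun i => (n i : ℝ), ((Pi.basisFun ℝ ι).mem_span_iff_repr_mem ℤ _).2 fun i => ⟨n i, rfl⟩⟩
  have hinj : Function.Injective embed := fun n m h => by
    ext i; simpa [embed] using congrFun (congrArg Subtype.val h) i
  have hnorm (n : ι → ℤ) : ‖(embed n : ι → ℝ)‖ = ‖n‖ := rfl
  refine ((ZLattice.summable_norm_rpow L (-p) ?_).comp_injective hinj).congr fun n => ?_
  · rw [hrank]; linarith
  · simp [hnorm]

theorem ENNReal.tsum_tsum_subtype_le_tsum_mul_tsum {α β : Type*} {P : α → β → Prop}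
    {f : α → β → ℝ≥0∞} {g : α → ℝ≥0∞} {h : β → ℝ≥0∞} (hf : ∀ a b, P a b → f a b ≤ g a * h b) :
    ∑' a, ∑' b : {b // P a b}, f a b ≤ (∑' a, g a) * ∑' b, h b := by
  rw [← ENNReal.tsum_mul_right]
  refine ENNReal.tsum_le_tsum fun a => ?_
  calc ∑' b : {b // P a b}, f a b ≤ ∑' b : {b // P a b}, g a * h b :=
        ENNReal.tsum_le_tsum fun b => hf a b b.2
    _ = g a * ∑' b : {b // P a b}, h b := ENNReal.tsum_mul_left
    _ ≤ g a * ∑' b, h b := by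
        gcongr; exact ENNReal.tsum_comp_le_tsum_of_injective Subtype.val_injective h

lemma enorm'_eq_norm (n : Fin 3 → ℤ) :
    enorm' n = ‖(WithLp.toLp 2 (fun i => (n i : ℝ)) : EuclideanSpace ℝ (Fin 3))‖ := by
  simp [enorm', EuclideanSpace.norm_eq]

lemma enorm'_add_le (x y : Fin 3 → ℤ) : enorm' (x + y) ≤ enorm' x + enorm' y := by
  simp only [enorm'_eq_norm, Pi.add_apply, Int.cast_add]
  exact norm_add_le (WithLp.toLp 2 fun i => (x i : ℝ)) (WithLp.toLp 2 fun i => (y i : ℝ))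

lemma jb_eq_sqrt (n : Fin 3 → ℤ) : jb n = √(1 + enorm' n ^ 2) := by
  rw [enorm', Real.sq_sqrt (by positivity), jb]

lemma jb_pos (n : Fin 3 → ℤ) : 0 < jb n := by
  rw [jb_eq_sqrt]; positivity

lemma jb_le_mul_jb_of_enorm'_le {x y : Fin 3 → ℤ} {c : ℝ} (hc : 1 ≤ c)
    (h : enorm' x ≤ c * enorm' y) : jb x ≤ c * jb y := by
  have hx : 0 ≤ enorm' x := Real.sqrt_nonneg _
  rw [jb_eq_sqrt, jb_eq_sqrt, ← Real.sqrt_sq (by linarith : 0 ≤ c), ← Real.sqrt_mul (sq_nonneg c)]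
  gcongr
  nlinarith [mul_self_le_mul_self hx h]

lemma norm_le_jb (n : Fin 3 → ℤ) : ‖n‖ ≤ jb n := by
  refine (pi_norm_le_iff_of_nonneg (jb_pos n).le).2 fun i => ?_
  rw [Int.norm_eq_abs, jb]
  refine Real.abs_le_sqrt ?_
  have := Finset.single_le_sum (fun j _ => sq_nonneg ((n j : ℝ))) (Finset.mem_univ i)
  linarith

lemma summable_jb_rpow_neg {p : ℝ} (hp : 3 < p) : Summable fun n => jb n ^ (-p) := by
  refine (summable_norm_rpow_neg_of_card_lt (ι := Fin 3) (by simpa)).of_norm_bounded_eventually ?_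
  filter_upwards [Filter.eventually_cofinite_ne 0] with n hn
  rw [Real.norm_of_nonneg (Real.rpow_nonneg (jb_pos n).le _)]
  exact Real.rpow_le_rpow_of_nonpos (norm_pos_iff.2 hn) (norm_le_jb n) (by linarith)

lemma jb_add_rpow_mul_jb_rpow_neg_two_le {σ : ℝ} (hσ : -2 ≤ σ) {n₁ n₂ : Fin 3 → ℤ}
    (h₂₁ : enorm' n₂ ≤ 2 * enorm' n₁) (h₁₂ : enorm' n₁ ≤ 2 * enorm' n₂) :
    jb (n₁ + n₂) ^ (σ + 2) * jb n₂ ^ (-2 : ℝ) ≤ 3 ^ (σ + 2) * 4 * jb n₁ ^ σ := by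
  have h₁ := jb_pos n₁
  have h₂ := jb_pos n₂
  have hsum : jb (n₁ + n₂) ≤ 3 * jb n₁ :=
    jb_le_mul_jb_of_enorm'_le (by norm_num) (by linarith [enorm'_add_le n₁ n₂])
  have hinv : jb n₂ ^ (-2 : ℝ) ≤ 4 * jb n₁ ^ (-2 : ℝ) := by
    have := jb_le_mul_jb_of_enorm'_le (by norm_num) h₁₂
    have := Real.rpow_le_rpow_of_nonpos h₁ this (by norm_num : (-2 : ℝ) ≤ 0)
    rw [Real.mul_rpow zero_le_two h₂.le, Real.rpow_neg zero_le_two,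
      show (2 : ℝ) ^ (2 : ℝ) = 4 by norm_num] at this
    linarith
  calc jb (n₁ + n₂) ^ (σ + 2) * jb n₂ ^ (-2 : ℝ)
      ≤ (3 * jb n₁) ^ (σ + 2) * (4 * jb n₁ ^ (-2 : ℝ)) := by
        gcongr
        · exact (jb_pos _).le
        · linarith
    _ = 3 ^ (σ + 2) * 4 * jb n₁ ^ σ := by
        rw [Real.mul_rpow (by norm_num) h₁.le, mul_mul_mul_comm, mul_assoc, ← Real.rpow_add h₁]
        norm_num
        ring

lemma jb_rpow_mul_jb_sub_rpow_neg_two_le {s₁ : ℝ} (hs₁ : -1 ≤ s₁) (s : ℝ) {n m : Fin 3 → ℤ}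
    (h₂₁ : enorm' (n - m) ≤ 2 * enorm' m) (h₁₂ : enorm' m ≤ 2 * enorm' (n - m)) :
    jb n ^ (2 * s) * jb (n - m) ^ (-2 : ℝ) ≤
      3 ^ (2 * s₁ + 2) * 4 * jb n ^ (-(2 * s₁ + 2 - 2 * s)) * jb m ^ (2 * s₁) := by
  have hres := jb_add_rpow_mul_jb_rpow_neg_two_le (σ := 2 * s₁) (by linarith) h₂₁ h₁₂
  rw [add_sub_cancel] at hres
  have hsplit : jb n ^ (2 * s) = jb n ^ (-(2 * s₁ + 2 - 2 * s)) * jb n ^ (2 * s₁ + 2) := by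
    rw [← Real.rpow_add (jb_pos n)]; congr 1; ring
  calc jb n ^ (2 * s) * jb (n - m) ^ (-2 : ℝ)
      = jb n ^ (-(2 * s₁ + 2 - 2 * s)) * (jb n ^ (2 * s₁ + 2) * jb (n - m) ^ (-2 : ℝ)) := by
        rw [hsplit, mul_assoc]
    _ ≤ jb n ^ (-(2 * s₁ + 2 - 2 * s)) * (3 ^ (2 * s₁ + 2) * 4 * jb m ^ (2 * s₁)) := by
        gcongr; exact (Real.rpow_pos_of_pos (jb_pos n) _).le
    _ = 3 ^ (2 * s₁ + 2) * 4 * jb n ^ (-(2 * s₁ + 2 - 2 * s)) * jb m ^ (2 * s₁) := by ring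

theorem resonant_product_weighted_sum_bound
    (s₁ s : ℝ) (hs₁ : 0 < s₁) (hs : s < s₁ - 1 / 2) :
    ∃ C : ℝ, 0 < C ∧ ∀ a : (Fin 3 → ℤ) → ℝ, (∀ m, 0 ≤ a m) →
      ∑' n : Fin 3 → ℤ,
        ∑' n₁ : {m : Fin 3 → ℤ //
            enorm' (n - m) ≤ 2 * enorm' m ∧ enorm' m ≤ 2 * enorm' (n - m)},
          ENNReal.ofReal
            (jb n ^ (2 * s) * a (n₁ : Fin 3 → ℤ) *
              jb (n - (n₁ : Fin 3 → ℤ)) ^ (-2 : ℝ))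
        ≤ ENNReal.ofReal C *
            ∑' m : Fin 3 → ℤ, ENNReal.ofReal (jb m ^ (2 * s₁) * a m) := by
  set p := 2 * s₁ + 2 - 2 * s
  set K : ℝ := 3 ^ (2 * s₁ + 2) * 4
  have hweight (n : Fin 3 → ℤ) : 0 < jb n ^ (-p) := Real.rpow_pos_of_pos (jb_pos n) _
  have hsum := summable_jb_rpow_neg (p := p) (by linarith)
  have hS : 0 < ∑' n, jb n ^ (-p) := hsum.tsum_pos (fun n => (hweight n).le) 0 (hweight 0)
  refine ⟨K * ∑' n, jb n ^ (-p), by positivity, fun a ha => ?_⟩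
  rw [ENNReal.ofReal_mul (by positivity),
    ENNReal.ofReal_tsum_of_nonneg (fun n => (hweight n).le) hsum,
    ← ENNReal.tsum_mul_left (f := fun n => ENNReal.ofReal (jb n ^ (-p)))]
  refine ENNReal.tsum_tsum_subtype_le_tsum_mul_tsum
    (f := fun n m => ENNReal.ofReal (jb n ^ (2 * s) * a m * jb (n - m) ^ (-2 : ℝ))) ?_
  rintro n m ⟨h₂₁, h₁₂⟩
  rw [← ENNReal.ofReal_mul (by positivity),
    ← ENNReal.ofReal_mul (mul_nonneg (by positivity) (hweight n).le)]
  refine ENNReal.ofReal_le_ofReal ?_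
  have hterm := jb_rpow_mul_jb_sub_rpow_neg_two_le (s₁ := s₁) (by linarith) s h₂₁ h₁₂
  calc jb n ^ (2 * s) * a m * jb (n - m) ^ (-2 : ℝ)
      = jb n ^ (2 * s) * jb (n - m) ^ (-2 : ℝ) * a m := by ring
    _ ≤ K * jb n ^ (-p) * jb m ^ (2 * s₁) * a m := mul_le_mul_of_nonneg_right hterm (ha m)
    _ = K * jb n ^ (-p) * (jb m ^ (2 * s₁) * a m) := by ring
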